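/- Let a, b, ν be real numbers and let y : ℝ → ℝ be twice differentiable on (−1,1) and satisfy Jacobi's differential equation (1−x²)·y''(x) + (b − a − (a+b+2)·x)·y'(x) + ν·(ν+a+b+1)·y(x) = 0 for all x ∈ (−1,1). Define ỹ : (0,π) → ℝ by ỹ(t) = y(cos t)·(sin(t/2))^{a+1/2}·(cos(t/2))^{b+1/2}. Then ỹ is twice differentiable on (0,π) and satisfies ỹ''(t) + q_ν^{(a,b)}(t)·ỹ(t) = 0 for all t ∈ (0,π). -/

import Mathlib

/-!
Liouville transformation. With `u t = y (cos t)` one has `u' = -sin t * y'` and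
`u'' = sin² t * y'' - cos t * y'`, so Jacobi's equation reads
`u'' + ((a + b + 1) cos t + a - b) / sin t * u' + ν (ν + a + b + 1) u = 0`.
The weight `W = sin (t/2) ^ (a + 1/2) * cos (t/2) ^ (b + 1/2)` has logarithmic derivative
`g = ((a + b + 1) cos t + a - b) / (2 sin t)`, exactly half that first-order coefficient, so in
`(u W)'' = W (u'' + 2 g u' + (g² + g') u)` the first-order terms are those of the equation, and
`(u W)'' + (ν (ν + a + b + 1) - g' - g²) u W = 0`; that potential is `jacobiQ`.
-/

open Real Set

/-- The coefficient in the modified Jacobi differential equation. -/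
noncomputable def jacobiQ (a b ν t : ℝ) : ℝ :=
  ν * (a + b + ν + 1)
    + (1 / 2) * (1 / Real.sin t) ^ 2 * (-(b - a) * Real.cos t + a + b + 1)
    - (1 / 4) * ((a + b + 1) * (Real.cos t / Real.sin t)
        - (b - a) * (1 / Real.sin t)) ^ 2

open Topology Filter

lemma cos_mem_Ioo_of_mem_Ioo {t : ℝ} (ht : t ∈ Ioo 0 π) : cos t ∈ Ioo (-1) 1 := by
  constructor
  · simpa using cos_lt_cos_of_nonneg_of_le_pi ht.1.le le_rfl ht.2
  · simpa using cos_lt_cos_of_nonneg_of_le_pi le_rfl ht.2.le ht.1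

lemma hasDerivAt_deriv_mul {u u' W W' : ℝ → ℝ} {t u'' W'' : ℝ}
    (hu : ∀ᶠ s in 𝓝 t, HasDerivAt u (u' s) s) (hW : ∀ᶠ s in 𝓝 t, HasDerivAt W (W' s) s)
    (hu' : HasDerivAt u' u'' t) (hW' : HasDerivAt W' W'' t) :
    HasDerivAt (deriv (fun s => u s * W s)) (u'' * W t + 2 * u' t * W' t + u t * W'') t := by
  have hderiv : deriv (fun s => u s * W s) =ᶠ[𝓝 t] fun s => u' s * W s + u s * W' s :=
    (hu.and hW).mono fun s hs => (hs.1.mul hs.2).deriv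
  refine ((hu'.mul hW.self_of_nhds).add (hu.self_of_nhds.mul hW')).congr_of_eventuallyEq
    hderiv |>.congr_deriv ?_
  ring

lemma hasDerivAt_comp_cos {y : ℝ → ℝ} {t : ℝ} (hy : DifferentiableAt ℝ y (cos t)) :
    HasDerivAt (fun s => y (cos s)) (-(deriv y (cos t) * sin t)) t :=
  (hy.hasDerivAt.comp t (hasDerivAt_cos t)).congr_deriv (by ring)

lemma hasDerivAt_deriv_comp_cos {y : ℝ → ℝ} {t : ℝ}
    (hy : DifferentiableAt ℝ (deriv y) (cos t)) :
    HasDerivAt (fun s => -(deriv y (cos s) * sin s))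
      (sin t ^ 2 * deriv (deriv y) (cos t) - cos t * deriv y (cos t)) t := by
  refine ((hasDerivAt_comp_cos hy).mul (hasDerivAt_sin t)).neg.congr_deriv ?_
  ring

noncomputable def halfAngleWeight (α β s : ℝ) : ℝ := sin (s / 2) ^ α * cos (s / 2) ^ β

/-- Equal to `α / 2 * cot (s / 2) - β / 2 * tan (s / 2)`, the logarithmic derivative of
`halfAngleWeight α β`, wherever `sin s ≠ 0`. -/
noncomputable def halfAngleWeightLogDeriv (α β s : ℝ) : ℝ :=
  ((α + β) * cos s + (α - β)) / (2 * sin s)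

section HalfAngle

variable (α β : ℝ) {t : ℝ}

lemma hasDerivAt_halfAngleWeight (hs : sin (t / 2) ≠ 0) (hc : cos (t / 2) ≠ 0) :
    HasDerivAt (halfAngleWeight α β)
      (halfAngleWeight α β t * halfAngleWeightLogDeriv α β t) t := by
  have hhalf : HasDerivAt (fun s : ℝ => s / 2) (1 / 2) t := (hasDerivAt_id t).div_const 2
  refine (((hhalf.sin.rpow_const (Or.inl hs)).mul
    (hhalf.cos.rpow_const (Or.inl hc)))).congr_deriv ?_
  have hsin : sin t = 2 * sin (t / 2) * cos (t / 2) := by rw [← sin_two_mul]; ring_nf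
  have hcos : cos t = 2 * cos (t / 2) ^ 2 - 1 := by rw [← cos_two_mul]; ring_nf
  rw [rpow_sub_one hs, rpow_sub_one hc, halfAngleWeight, halfAngleWeightLogDeriv, hsin, hcos]
  field_simp
  linear_combination (-2 * β * sin (t / 2) ^ α * cos (t / 2) ^ β) * sin_sq_add_cos_sq (t / 2)

lemma hasDerivAt_halfAngleWeightLogDeriv (hs : sin t ≠ 0) :
    HasDerivAt (halfAngleWeightLogDeriv α β)
      (-((α + β) + (α - β) * cos t) / (2 * sin t ^ 2)) t := by
  refine ((((hasDerivAt_cos t).const_mul (α + β)).add_const (α - β)).div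
    ((hasDerivAt_sin t).const_mul 2) (by simpa using hs)).congr_deriv ?_
  field_simp
  linear_combination (-(α + β)) * sin_sq_add_cos_sq t

lemma two_mul_sin_mul_halfAngleWeightLogDeriv (hs : sin t ≠ 0) :
    2 * sin t * halfAngleWeightLogDeriv α β t = (α + β) * cos t + (α - β) := by
  rw [halfAngleWeightLogDeriv]
  field_simp

end HalfAngle

lemma jacobiQ_eq_sub_halfAngleWeightLogDeriv_sq (a b ν t : ℝ) :
    jacobiQ a b ν t = ν * (ν + a + b + 1)
      + ((a + b + 1) + (a - b) * cos t) / (2 * sin t ^ 2)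
      - halfAngleWeightLogDeriv (a + 1 / 2) (b + 1 / 2) t ^ 2 := by
  rw [jacobiQ, halfAngleWeightLogDeriv]
  ring

theorem modified_jacobi_equation (a b ν : ℝ) (y : ℝ → ℝ)
    (hy : ∀ x ∈ Ioo (-1 : ℝ) 1, DifferentiableAt ℝ y x ∧ DifferentiableAt ℝ (deriv y) x)
    (heq : ∀ x ∈ Ioo (-1 : ℝ) 1,
      (1 - x ^ 2) * deriv (deriv y) x + (b - a - (a + b + 2) * x) * deriv y x
        + ν * (ν + a + b + 1) * y x = 0) :
    (∀ t ∈ Ioo 0 Real.pi,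
      DifferentiableAt ℝ
        (fun s => y (Real.cos s) * Real.sin (s / 2) ^ (a + 1 / 2)
          * Real.cos (s / 2) ^ (b + 1 / 2)) t ∧
      DifferentiableAt ℝ
        (deriv (fun s => y (Real.cos s) * Real.sin (s / 2) ^ (a + 1 / 2)
          * Real.cos (s / 2) ^ (b + 1 / 2))) t) ∧
    (∀ t ∈ Ioo 0 Real.pi,
      deriv (deriv (fun s => y (Real.cos s) * Real.sin (s / 2) ^ (a + 1 / 2)
          * Real.cos (s / 2) ^ (b + 1 / 2))) t
        + jacobiQ a b ν t * (y (Real.cos t) * Real.sin (t / 2) ^ (a + 1 / 2)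
            * Real.cos (t / 2) ^ (b + 1 / 2)) = 0) := by
  set W := halfAngleWeight (a + 1 / 2) (b + 1 / 2)
  set g := halfAngleWeightLogDeriv (a + 1 / 2) (b + 1 / 2)
  have hfun : ∀ s, y (cos s) * sin (s / 2) ^ (a + 1 / 2) * cos (s / 2) ^ (b + 1 / 2)
      = y (cos s) * W s := fun s => mul_assoc _ _ _
  have hhalf : ∀ t ∈ Ioo 0 π, sin (t / 2) ≠ 0 ∧ cos (t / 2) ≠ 0 := fun t ht =>
    ⟨(sin_pos_of_pos_of_lt_pi (by linarith [ht.1]) (by linarith [ht.2, pi_pos])).ne',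
      (cos_pos_of_mem_Ioo ⟨by linarith [ht.1, pi_pos], by linarith [ht.2]⟩).ne'⟩
  have hW : ∀ t ∈ Ioo 0 π, HasDerivAt W (W t * g t) t := fun t ht =>
    hasDerivAt_halfAngleWeight _ _ (hhalf t ht).1 (hhalf t ht).2
  have hW' : ∀ t ∈ Ioo 0 π, HasDerivAt (fun s => W s * g s)
      (W t * (g t ^ 2 - ((a + b + 1) + (a - b) * cos t) / (2 * sin t ^ 2))) t := fun t ht =>
    ((hW t ht).mul (hasDerivAt_halfAngleWeightLogDeriv _ _
      (sin_pos_of_mem_Ioo ht).ne')).congr_deriv (by ring)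
  have hsecond : ∀ t ∈ Ioo 0 π, HasDerivAt (deriv fun s => y (cos s) * W s)
      ((sin t ^ 2 * deriv (deriv y) (cos t) - cos t * deriv y (cos t)) * W t
        + 2 * -(deriv y (cos t) * sin t) * (W t * g t)
        + y (cos t) * (W t * (g t ^ 2 - ((a + b + 1) + (a - b) * cos t) / (2 * sin t ^ 2)))) t :=
    fun t ht => hasDerivAt_deriv_mul
      (eventually_of_mem (Ioo_mem_nhds ht.1 ht.2) fun s hs =>
        hasDerivAt_comp_cos (hy _ (cos_mem_Ioo_of_mem_Ioo hs)).1)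
      (eventually_of_mem (Ioo_mem_nhds ht.1 ht.2) hW)
      (hasDerivAt_deriv_comp_cos (hy _ (cos_mem_Ioo_of_mem_Ioo ht)).2) (hW' t ht)
  simp only [hfun]
  refine ⟨fun t ht => ⟨?_, (hsecond t ht).differentiableAt⟩, fun t ht => ?_⟩
  · exact ((hasDerivAt_comp_cos (hy _ (cos_mem_Ioo_of_mem_Ioo ht)).1).mul
      (hW t ht)).differentiableAt
  · rw [(hsecond t ht).deriv, jacobiQ_eq_sub_halfAngleWeightLogDeriv_sq]
    linear_combination W t * heq _ (cos_mem_Ioo_of_mem_Ioo ht) - W t * deriv y (cos t) *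
      two_mul_sin_mul_halfAngleWeightLogDeriv _ _ (sin_pos_of_mem_Ioo ht).ne'
      + W t * deriv (deriv y) (cos t) * sin_sq_add_cos_sq t
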